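/- For n ≥ 2k ≥ 2, the sign character sgn of S_n is a base-controlling homomorphism for the action of S_n on k-element subsets of {1,...,n}: a sequence A of k-subsets is a base if and only if every permutation in the pointwise stabiliser of A is even. -/

import Mathlib

open scoped BigOperators Classical

/-- The standard inner product of class functions on a finite group. -/
noncomputable def cInner (G : Type) [Group G] (φ ψ : G → ℂ) : ℂ :=
  (Nat.card G : ℂ)⁻¹ * ∑ᶠ g : G, φ g * starRingEnd ℂ (ψ g)

/-- The induction of a class function from a subgroup, given by the usual formula. -/
noncomputable def indChar {G : Type} [Group G] (H : Subgroup G) (α : H → ℂ) : G → ℂ :=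
  fun g => (Nat.card H : ℂ)⁻¹ *
    ∑ᶠ x : G, if h : x * g * x⁻¹ ∈ H then α ⟨x * g * x⁻¹, h⟩ else 0

/-- Restriction of a class function to a subgroup. -/
def resChar {G : Type} [Group G] (H : Subgroup G) (α : G → ℂ) : H → ℂ :=
  fun h => α (h : G)

/-- `α` is a (complex) character of `G`. -/
def IsChar (G : Type) [Group G] (α : G → ℂ) : Prop :=
  ∃ V : FDRep ℂ G, α = V.character

/-- `α` is an irreducible (complex) character of `G`. -/
def IsIrrChar (G : Type) [Group G] (α : G → ℂ) : Prop :=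
  ∃ V : FDRep ℂ G, CategoryTheory.Simple V ∧ α = V.character

/-- Two class functions on `H` have induced characters sharing a common irreducible
constituent. -/
def SharesIrrConstituent {G : Type} [Group G] (H : Subgroup G) (α β : H → ℂ) : Prop :=
  ∃ γ : G → ℂ, IsIrrChar G γ ∧ cInner G (indChar H α) γ ≠ 0 ∧ cInner G (indChar H β) γ ≠ 0

/-- The Külshammer graph of `H ≤ G`: vertices are irreducible characters of `H`
(other class functions are isolated vertices), two of them being adjacent iff their
induced characters share a common irreducible constituent. -/
def kulshammerGraph (G : Type) [Group G] (H : Subgroup G) : SimpleGraph (H → ℂ) where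
  Adj α β := α ≠ β ∧ IsIrrChar H α ∧ IsIrrChar H β ∧ SharesIrrConstituent H α β
  symm := ⟨by
    rintro a b ⟨hne, ha, hb, γ, hγ, h1, h2⟩
    exact ⟨hne.symm, hb, ha, γ, hγ, h2, h1⟩⟩
  loopless := ⟨fun a h => h.1 rfl⟩

/-- The diameter of the Külshammer graph: the diameter of the subgraph induced on the
set of irreducible characters of `H`. -/
noncomputable def kulshammerDiam (G : Type) [Group G] (H : Subgroup G) : ℕ :=
  ((kulshammerGraph G H).induce {α | IsIrrChar H α}).diam

/-- The base size of a permutation group: the least length of a tuple of points whose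
pointwise stabiliser is trivial. -/
noncomputable def baseSize (G Ω : Type) [Group G] [MulAction G Ω] : ℕ :=
  sInf {m | ∃ A : Fin m → Ω, (⨅ i, MulAction.stabilizer G (A i)) = ⊥}

/-- A homomorphism `φ : G → {1, -1}` is base-controlling if a tuple of points is a base
exactly when `φ` is trivial on its pointwise stabiliser. -/
def IsBaseControlling (G Ω : Type) [Group G] [MulAction G Ω] (φ : G →* ℂ) : Prop :=
  (∀ g : G, φ g = 1 ∨ φ g = -1) ∧
  ∀ (m : ℕ) (A : Fin m → Ω),
    (⨅ i, MulAction.stabilizer G (A i)) = ⊥ ↔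
      ∀ g ∈ ⨅ i, MulAction.stabilizer G (A i), φ g = 1


instance kSubsetSMul (n k : ℕ) :
    SMul (Equiv.Perm (Fin n)) {s : Finset (Fin n) // s.card = k} where
  smul g s := ⟨s.1.image g, by
    rw [Finset.card_image_of_injective _ g.injective]; exact s.2⟩

theorem kSubset_smul_coe {n k : ℕ} (g : Equiv.Perm (Fin n))
    (s : {s : Finset (Fin n) // s.card = k}) : (g • s).1 = s.1.image g := rfl

/-- The action of `Sₙ` on `k`-element subsets of `{1,…,n}`. -/
instance kSubsetAction (n k : ℕ) :
    MulAction (Equiv.Perm (Fin n)) {s : Finset (Fin n) // s.card = k} where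
  one_smul s := Subtype.ext (by rw [kSubset_smul_coe]; simp)
  mul_smul g h s := Subtype.ext (by
    rw [kSubset_smul_coe, kSubset_smul_coe, kSubset_smul_coe, Finset.image_image]; rfl)

/-- The sign character of `Sₙ`, as a complex-valued homomorphism. -/
noncomputable def sgnC (n : ℕ) : Equiv.Perm (Fin n) →* ℂ :=
  (Int.castRingHom ℂ).toMonoidHom.comp ((Units.coeHom ℤ).comp Equiv.Perm.sign)



lemma swap_image_of_iff {n : ℕ} (x y : Fin n) (s : Finset (Fin n))
    (h : x ∈ s ↔ y ∈ s) : s.image (Equiv.swap x y) = s := by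
  ext a
  rw [show (s.image (Equiv.swap x y) : Finset (Fin n))
      = s.map (Equiv.swap x y).toEmbedding by simp [Finset.map_eq_image],
    Finset.mem_map_equiv, Equiv.symm_swap]
  rcases eq_or_ne a x with rfl | hax
  · simpa using h.symm
  rcases eq_or_ne a y with rfl | hay
  · simpa using h
  · rw [Equiv.swap_apply_of_ne_of_ne hax hay]

lemma key_lemma {n k m : ℕ} (A : Fin m → {s : Finset (Fin n) // s.card = k})
    (h : ∀ g ∈ ⨅ i, MulAction.stabilizer (Equiv.Perm (Fin n)) (A i),
      Equiv.Perm.sign g = 1) :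
    (⨅ i, MulAction.stabilizer (Equiv.Perm (Fin n)) (A i)) = ⊥ := by
  rw [Subgroup.eq_bot_iff_forall]
  intro g hg
  by_contra hg1
  obtain ⟨x, hx⟩ : ∃ x, g x ≠ x := by
    by_contra hall
    push_neg at hall
    exact hg1 (Equiv.ext hall)
  have hmem : ∀ i, (A i).1.image g = (A i).1 := by
    intro i
    have := (Subgroup.mem_iInf).1 hg i
    rw [MulAction.mem_stabilizer_iff] at this
    have := congrArg Subtype.val this
    rwa [kSubset_smul_coe] at this
  have hτ : Equiv.swap x (g x) ∈ ⨅ i, MulAction.stabilizer (Equiv.Perm (Fin n)) (A i) := by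
    rw [Subgroup.mem_iInf]
    intro i
    rw [MulAction.mem_stabilizer_iff]
    apply Subtype.ext
    rw [kSubset_smul_coe]
    apply swap_image_of_iff
    constructor
    · intro hx'
      rw [← hmem i]
      exact Finset.mem_image_of_mem _ hx'
    · intro hgx
      rw [← hmem i] at hgx
      obtain ⟨a, ha, hag⟩ := Finset.mem_image.1 hgx
      rwa [← g.injective hag]
  have := h _ hτ
  rw [Equiv.Perm.sign_swap (Ne.symm hx)] at this
  exact absurd this (by decide)

theorem stmt_8 (n k : ℕ) (hk : 1 ≤ k) (hn : 2 * k ≤ n) :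
    IsBaseControlling (Equiv.Perm (Fin n)) {s : Finset (Fin n) // s.card = k} (sgnC n) ∧
    ∀ (m : ℕ) (A : Fin m → {s : Finset (Fin n) // s.card = k}),
      (⨅ i, MulAction.stabilizer (Equiv.Perm (Fin n)) (A i)) = ⊥ ↔
        ∀ g ∈ ⨅ i, MulAction.stabilizer (Equiv.Perm (Fin n)) (A i),
          Equiv.Perm.sign g = 1 := by
  have main : ∀ (m : ℕ) (A : Fin m → {s : Finset (Fin n) // s.card = k}),
      (⨅ i, MulAction.stabilizer (Equiv.Perm (Fin n)) (A i)) = ⊥ ↔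
        ∀ g ∈ ⨅ i, MulAction.stabilizer (Equiv.Perm (Fin n)) (A i),
          Equiv.Perm.sign g = 1 := by
    intro m A
    constructor
    · intro h g hg
      rw [h, Subgroup.mem_bot] at hg
      simp [hg]
    · exact key_lemma A
  refine ⟨⟨?_, ?_⟩, main⟩
  · intro g
    rcases Int.units_eq_one_or (Equiv.Perm.sign g) with h | h <;>
      simp [sgnC, h]
  · intro m A
    rw [main m A]
    have hsgn : ∀ g : Equiv.Perm (Fin n), sgnC n g = 1 ↔ Equiv.Perm.sign g = 1 := by
      intro g
      rcases Int.units_eq_one_or (Equiv.Perm.sign g) with h | h <;>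
        simp [sgnC, h] <;> norm_num
    exact ⟨fun h g hg => (hsgn g).2 (h g hg), fun h g hg => (hsgn g).1 (h g hg)⟩
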